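/- Let 0 < σ < 1 and g = (a_{ij}) ∈ SL(2,ℂ). For every continuous compactly supported function f : ℂ → ℂ, the function (T^σ(g)f)(z) = |a_{12}z + a_{22}|^{-2-2σ} f((a_{11}z + a_{21})/(a_{12}z + a_{22})) (defined for z with a_{12}z + a_{22} ≠ 0) satisfies B(T^σ(g)f, T^σ(g)f) = B(f,f), where B(f₁,f₂) = ∬_{ℂ×ℂ} f₁(z) · conj(f₂(w)) · |z − w|^{-(2-2σ)} dA(z) dA(w) and dA is Lebesgue measure on ℂ. -/

import Mathlib

open MeasureTheory Complex

noncomputable section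

/-- The complementary series bilinear pairing
`B(f₁,f₂) = ∬_{ℂ×ℂ} f₁(z) conj(f₂(w)) |z−w|^{-(2-2σ)} dA(z) dA(w)`. -/
def complementaryFormC (σ : ℝ) (f₁ f₂ : ℂ → ℂ) : ℂ :=
  ∫ p : ℂ × ℂ, f₁ p.1 * (starRingEnd ℂ) (f₂ p.2) *
    ((‖p.1 - p.2‖ ^ (-(2 - 2 * σ)) : ℝ) : ℂ)

/-- The complementary series operator `T^σ(g)` of `SL(2,ℂ)`. -/
def complementarySeriesC (σ : ℝ) (g : Matrix.SpecialLinearGroup (Fin 2) ℂ)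
    (f : ℂ → ℂ) : ℂ → ℂ := fun z =>
  ((‖g.1 0 1 * z + g.1 1 1‖ ^ (-2 - 2 * σ) : ℝ) : ℂ) *
    f ((g.1 0 0 * z + g.1 1 0) / (g.1 0 1 * z + g.1 1 1))

/-!
Write `h z = (g₀₀ z + g₁₀) / j z` with `j z = g₀₁ z + g₁₁`. Since `det g = 1`,
`h z - h w = (z - w) / (j z * j w)` and `h' z = (j z)⁻²`, hence
`|j z|^(-2-2σ) |j w|^(-2-2σ) |z - w|^(-(2-2σ)) = |h' z|² |h' w|² |h z - h w|^(-(2-2σ))`.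
So the integrand of `B(T^σ(g) f, T^σ(g) f)` is the integrand of `B(f, f)` composed with `h × h`,
times the real Jacobian `|h' z|² |h' w|²` of `h × h`. As `h` is injective off the zero of `j` and
misses at most one point, the change of variables formula on `ℂ × ℂ` gives the identity.
-/

lemma det_restrictScalars_toSpanSingleton (v : ℂ) :
    ((ContinuousLinearMap.toSpanSingleton ℂ v).restrictScalars ℝ).det = normSq v := by
  rw [ContinuousLinearMap.det, ContinuousLinearMap.coe_restrictScalars,
    LinearMap.det_restrictScalars]
  simp [Algebra.norm_complex_apply]

lemma ae_mem_prod {α β : Type*} [MeasurableSpace α] [MeasurableSpace β] {μ : Measure α}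
    {ν : Measure β} {s : Set α} {t : Set β} (hs : μ sᶜ = 0) (ht : ν tᶜ = 0) :
    ∀ᵐ p ∂μ.prod ν, p ∈ s ×ˢ t := by
  have := Measure.set_prod_ae_eq (ae_eq_univ.mpr hs) (ae_eq_univ.mpr ht) (μ := μ) (ν := ν)
  rw [Set.univ_prod_univ, ae_eq_univ] at this
  exact mem_ae_iff.mpr this

theorem integral_comp_prodMap_smul_norm_deriv_sq {E : Type*} [NormedAddCommGroup E]
    [NormedSpace ℝ E] {h h' : ℂ → ℂ} {s : Set ℂ} (hs : MeasurableSet s)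
    (hs_null : volume sᶜ = 0) (himage_null : volume (h '' s)ᶜ = 0) (hinj : Set.InjOn h s)
    (hderiv : ∀ z ∈ s, HasDerivWithinAt h (h' z) s z) (F : ℂ × ℂ → E) :
    ∫ p : ℂ × ℂ, (‖h' p.1‖ ^ 2 * ‖h' p.2‖ ^ 2) • F (h p.1, h p.2) = ∫ p, F p := by
  let J : ℂ → ℂ →L[ℝ] ℂ := fun z =>
    (ContinuousLinearMap.toSpanSingleton ℂ (h' z)).restrictScalars ℝ
  have hJ : ∀ p ∈ s ×ˢ s,
      HasFDerivWithinAt (Prod.map h h) ((J p.1).prodMap (J p.2)) (s ×ˢ s) p := by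
    rintro ⟨z, w⟩ ⟨hz, hw⟩
    exact HasFDerivWithinAt.prodMap (p := (z, w))
      (((hderiv z hz).hasFDerivWithinAt.restrictScalars ℝ).mono (Set.fst_image_prod_subset s s))
      (((hderiv w hw).hasFDerivWithinAt.restrictScalars ℝ).mono (Set.snd_image_prod_subset s s))
  have hdetJ : ∀ p : ℂ × ℂ, |((J p.1).prodMap (J p.2)).det| = ‖h' p.1‖ ^ 2 * ‖h' p.2‖ ^ 2 := by
    intro p
    rw [show ((J p.1).prodMap (J p.2)).det = (J p.1).det * (J p.2).det from
        LinearMap.det_prodMap _ _, det_restrictScalars_toSpanSingleton,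
      det_restrictScalars_toSpanSingleton, normSq_eq_norm_sq, normSq_eq_norm_sq,
      abs_of_nonneg (by positivity)]
  have : (volume : Measure (ℂ × ℂ)).IsAddHaarMeasure := by
    rw [Measure.volume_eq_prod]; infer_instance
  calc ∫ p : ℂ × ℂ, (‖h' p.1‖ ^ 2 * ‖h' p.2‖ ^ 2) • F (h p.1, h p.2)
      = ∫ p in s ×ˢ s, |((J p.1).prodMap (J p.2)).det| • F (Prod.map h h p) := by
        rw [Measure.restrict_eq_self_of_ae_mem (μ := volume) (ae_mem_prod hs_null hs_null)]
        simp only [hdetJ, Prod.map]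
    _ = ∫ p in Prod.map h h '' (s ×ˢ s), F p :=
        (integral_image_eq_integral_abs_det_fderiv_smul volume (hs.prod hs) hJ
          (hinj.prodMap hinj) F).symm
    _ = ∫ p, F p := by
        rw [Set.prodMap_image_prod, Measure.restrict_eq_self_of_ae_mem (μ := volume)
          (ae_mem_prod himage_null himage_null)]

lemma subsingleton_setOf_mul_add_eq_zero {R : Type*} [CommRing R] [NoZeroDivisors R] {c d : R}
    (hcd : c ≠ 0 ∨ d ≠ 0) : {z : R | c * z + d = 0}.Subsingleton := by
  intro z (hz : c * z + d = 0) w (hw : c * w + d = 0)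
  rcases mul_eq_zero.mp (by linear_combination hz - hw : c * (z - w) = 0) with hc | hzw
  · rw [hc, zero_mul, zero_add] at hz
    exact (hcd.resolve_left (not_not.mpr hc) hz).elim
  · exact sub_eq_zero.mp hzw

lemma Real.rpow_sub_four_mul_rpow_sub_four_mul_rpow_neg {u v : ℝ} (hu : 0 < u) (hv : 0 < v)
    {r : ℝ} (hr : 0 ≤ r) (t : ℝ) :
    u ^ (t - 4) * v ^ (t - 4) * r ^ (-t) = (u ^ 4)⁻¹ * (v ^ 4)⁻¹ * (r / (u * v)) ^ (-t) := by
  rw [show t - 4 = t - ((4 : ℕ) : ℝ) by norm_num, Real.rpow_sub_natCast hu.ne',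
    Real.rpow_sub_natCast hv.ne', Real.div_rpow hr (by positivity), Real.mul_rpow hu.le hv.le,
    Real.rpow_neg hu.le, Real.rpow_neg hv.le, Real.rpow_neg hr]
  field_simp

lemma Matrix.SpecialLinearGroup.det_fin_two_eq_one {R : Type*} [CommRing R]
    (g : Matrix.SpecialLinearGroup (Fin 2) R) : g.1 0 0 * g.1 1 1 - g.1 0 1 * g.1 1 0 = 1 :=
  g.1.det_fin_two ▸ g.2

section Mobius

variable (g : Matrix.SpecialLinearGroup (Fin 2) ℂ) {z w : ℂ}

def mobiusDenom (z : ℂ) : ℂ := g.1 0 1 * z + g.1 1 1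

def mobius (z : ℂ) : ℂ := (g.1 0 0 * z + g.1 1 0) / mobiusDenom g z

lemma mobius_sub_mobius (hz : mobiusDenom g z ≠ 0) (hw : mobiusDenom g w ≠ 0) :
    mobius g z - mobius g w = (z - w) / (mobiusDenom g z * mobiusDenom g w) := by
  rw [mobius, mobius, div_sub_div _ _ hz hw]
  congr 1
  unfold mobiusDenom
  linear_combination (z - w) * g.det_fin_two_eq_one

lemma injOn_mobius : Set.InjOn (mobius g) {z | mobiusDenom g z ≠ 0} := by
  intro z hz w hw hzw
  have := mobius_sub_mobius g hz hw
  rw [hzw, sub_self, eq_comm, div_eq_zero_iff, sub_eq_zero] at this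
  exact this.resolve_right (mul_ne_zero hz hw)

lemma hasDerivAt_mobius (hz : mobiusDenom g z ≠ 0) :
    HasDerivAt (mobius g) ((mobiusDenom g z ^ 2)⁻¹) z := by
  have hlin : ∀ a b : ℂ, HasDerivAt (fun z => a * z + b) a z := fun a b => by
    simpa using ((hasDerivAt_id z).const_mul a).add_const b
  refine ((hlin (g.1 0 0) (g.1 1 0)).div (hlin (g.1 0 1) (g.1 1 1)) hz).congr_deriv ?_
  rw [inv_eq_one_div]
  congr 1
  linear_combination g.det_fin_two_eq_one

lemma volume_compl_setOf_mobiusDenom_ne_zero : volume {z | mobiusDenom g z ≠ 0}ᶜ = 0 := by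
  have hrow : g.1 0 1 ≠ 0 ∨ g.1 1 1 ≠ 0 := by
    by_contra! h
    simpa [h] using g.det_fin_two_eq_one
  have hcompl : {z | mobiusDenom g z ≠ 0}ᶜ = {z | g.1 0 1 * z + g.1 1 1 = 0} := by
    ext z
    simp [mobiusDenom]
  rw [hcompl]
  exact (subsingleton_setOf_mul_add_eq_zero hrow).measure_zero volume

/-- Every `u` with `g₀₀ - g₀₁ u ≠ 0` is the image of `(g₁₁ u - g₁₀) / (g₀₀ - g₀₁ u)`. -/
lemma volume_compl_image_mobius :
    volume (mobius g '' {z | mobiusDenom g z ≠ 0})ᶜ = 0 := by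
  have hdet := g.det_fin_two_eq_one
  have hcol : -g.1 0 1 ≠ 0 ∨ g.1 0 0 ≠ 0 := by
    by_contra! h
    simp [neg_eq_zero.mp h.1, h.2] at hdet
  refine measure_mono_null (fun u hu => ?_)
    ((subsingleton_setOf_mul_add_eq_zero hcol).measure_zero volume)
  by_contra hpole
  have hpole' : g.1 0 0 - g.1 0 1 * u ≠ 0 := by
    contrapose! hpole
    change -g.1 0 1 * u + g.1 0 0 = 0
    linear_combination hpole
  have hdenom : mobiusDenom g ((g.1 1 1 * u - g.1 1 0) / (g.1 0 0 - g.1 0 1 * u))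
      = (g.1 0 0 - g.1 0 1 * u)⁻¹ := by
    unfold mobiusDenom
    field_simp
    linear_combination hdet
  refine hu ⟨_, show mobiusDenom g _ ≠ 0 from hdenom ▸ inv_ne_zero hpole', ?_⟩
  rw [mobius, hdenom, div_inv_eq_mul, mul_div_assoc', div_add' _ _ _ hpole',
    div_mul_cancel₀ _ hpole']
  linear_combination u * hdet

end Mobius

lemma complementarySeriesC_apply (σ : ℝ) (g : Matrix.SpecialLinearGroup (Fin 2) ℂ)
    (f : ℂ → ℂ) (z : ℂ) :
    complementarySeriesC σ g f z = ((‖mobiusDenom g z‖ ^ (-2 - 2 * σ) : ℝ) : ℂ) * f (mobius g z) :=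
  rfl

lemma complementarySeriesC_mul_conj_mul_kernel (σ : ℝ) (g : Matrix.SpecialLinearGroup (Fin 2) ℂ)
    (f : ℂ → ℂ) {z w : ℂ} (hz : mobiusDenom g z ≠ 0) (hw : mobiusDenom g w ≠ 0) :
    complementarySeriesC σ g f z * (starRingEnd ℂ) (complementarySeriesC σ g f w) *
        ((‖z - w‖ ^ (-(2 - 2 * σ)) : ℝ) : ℂ)
      = (‖(mobiusDenom g z ^ 2)⁻¹‖ ^ 2 * ‖(mobiusDenom g w ^ 2)⁻¹‖ ^ 2) •
        (f (mobius g z) * (starRingEnd ℂ) (f (mobius g w)) *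
          ((‖mobius g z - mobius g w‖ ^ (-(2 - 2 * σ)) : ℝ) : ℂ)) := by
  have hrescale := Real.rpow_sub_four_mul_rpow_sub_four_mul_rpow_neg (norm_pos_iff.mpr hz)
    (norm_pos_iff.mpr hw) (norm_nonneg (z - w)) (2 - 2 * σ)
  rw [show 2 - 2 * σ - 4 = -2 - 2 * σ by ring] at hrescale
  rw [complementarySeriesC_apply, complementarySeriesC_apply, mobius_sub_mobius g hz hw,
    norm_div, norm_mul, norm_inv, norm_inv, norm_pow, norm_pow, map_mul, conj_ofReal, real_smul]
  have hrescaleC := congrArg (fun x : ℝ => (x : ℂ)) hrescale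
  push_cast at hrescaleC ⊢
  linear_combination (f (mobius g z) * (starRingEnd ℂ) (f (mobius g w))) * hrescaleC

theorem complementarySeriesC_unitary_general (σ : ℝ)
    (g : Matrix.SpecialLinearGroup (Fin 2) ℂ) (f : ℂ → ℂ) :
    complementaryFormC σ (complementarySeriesC σ g f) (complementarySeriesC σ g f)
      = complementaryFormC σ f f := by
  have hS : MeasurableSet {z | mobiusDenom g z ≠ 0} :=
    (isOpen_ne_fun (by unfold mobiusDenom; fun_prop) continuous_const).measurableSet
  have hS_null := volume_compl_setOf_mobiusDenom_ne_zero g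
  calc complementaryFormC σ (complementarySeriesC σ g f) (complementarySeriesC σ g f)
      = ∫ p : ℂ × ℂ, (‖(mobiusDenom g p.1 ^ 2)⁻¹‖ ^ 2 * ‖(mobiusDenom g p.2 ^ 2)⁻¹‖ ^ 2) •
          (f (mobius g p.1) * (starRingEnd ℂ) (f (mobius g p.2)) *
            ((‖mobius g p.1 - mobius g p.2‖ ^ (-(2 - 2 * σ)) : ℝ) : ℂ)) :=
        integral_congr_ae <| (ae_mem_prod hS_null hS_null).mono fun _ hp =>
          complementarySeriesC_mul_conj_mul_kernel σ g f hp.1 hp.2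
    _ = complementaryFormC σ f f :=
        integral_comp_prodMap_smul_norm_deriv_sq hS hS_null (volume_compl_image_mobius g)
          (injOn_mobius g) (fun _ hz => (hasDerivAt_mobius g hz).hasDerivWithinAt)
          fun p => f p.1 * (starRingEnd ℂ) (f p.2) * ((‖p.1 - p.2‖ ^ (-(2 - 2 * σ)) : ℝ) : ℂ)

/-- For `0 < σ < 1`, `g ∈ SL(2,ℂ)`, and every continuous compactly supported `f : ℂ → ℂ`,
`B(T^σ(g)f, T^σ(g)f) = B(f,f)`: unitarity of the complementary series of `SL(2,ℂ)`. -/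
theorem complementarySeriesC_unitary (σ : ℝ) (hσ₀ : 0 < σ) (hσ₁ : σ < 1)
    (g : Matrix.SpecialLinearGroup (Fin 2) ℂ) (f : ℂ → ℂ)
    (hf : Continuous f) (hsupp : HasCompactSupport f) :
    complementaryFormC σ (complementarySeriesC σ g f) (complementarySeriesC σ g f)
      = complementaryFormC σ f f :=
  complementarySeriesC_unitary_general σ g f
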